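/- There exists a constant C̄ > 0, independent of y, such that for every y ∈ ℝ³ with ‖y‖ < 1/2 and every s in the closed unit ball of ℝ³ with s ≠ y, one has ‖Dπ_y(s)‖ ≤ C̄/‖s−y‖ and ‖D²π_y(s)‖ ≤ C̄/‖s−y‖². -/

import Mathlib

/-!
Write `π_y(s) = Φ(y, s - y)`, where `Φ(y, u) = rayToSphere y u` is the point at which the ray
from `y` in direction `u` leaves the unit ball. `Φ` is smooth on `{‖y‖ < 1, u ≠ 0}` and invariant under
positive rescaling of `u`, so its first and second `u`-derivatives are homogeneous of degrees
`-1` and `-2`. They are bounded on the compact set `{‖y‖ ≤ 1/2} × S²` by continuity, and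
rescaling `u = s - y` to the unit sphere gives the bounds `C/‖s - y‖` and `C/‖s - y‖²`.
-/

noncomputable section

abbrev E3 : Type := EuclideanSpace ℝ (Fin 3)

/-- The projection `π_y` of the closed unit ball (minus `{y}`) onto the unit
sphere `S²`, along the ray from `y` through `s`. -/
def piProj (y : E3) (s : E3) : E3 :=
  y + ((-(inner ℝ y (s - y) : ℝ) +
        Real.sqrt ((inner ℝ y (s - y) : ℝ) ^ 2 + ‖s - y‖ ^ 2 * (1 - ‖y‖ ^ 2))) /
      ‖s - y‖ ^ 2) • (s - y)

open Topology

section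

variable {𝕜 E F G : Type*} [NontriviallyNormedField 𝕜] [NormedAddCommGroup E] [NormedSpace 𝕜 E]
  [NormedAddCommGroup F] [NormedSpace 𝕜 F] [NormedAddCommGroup G] [NormedSpace 𝕜 G]

theorem fderiv_eq_smul_fderiv_smul_of_eventuallyEq {f : E → F} {a c : 𝕜} {u : E}
    (hf : f =ᶠ[𝓝 u] fun v => a • f (c • v)) :
    fderiv 𝕜 f u = (a * c) • fderiv 𝕜 f (c • u) := by
  rw [hf.fderiv_eq, show (fun v => a • f (c • v)) = a • fun v => f (c • v) from rfl,
    fderiv_const_smul_field, Pi.smul_apply, fderiv_comp_smul, smul_smul]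

theorem ContDiffAt.fderiv_uncurry {f : E → F → G} {y : E} {u : F} {m n : WithTop ℕ∞}
    (hf : ContDiffAt 𝕜 n (Function.uncurry f) (y, u)) (hmn : m + 1 ≤ n) :
    ContDiffAt 𝕜 m (fun p : E × F => fderiv 𝕜 (f p.1) p.2) (y, u) :=
  ContDiffAt.fderiv (f := fun p v => f p.1 v)
    (hf.comp ((y, u), u) (contDiffAt_fst.fst.prodMk contDiffAt_snd)) contDiffAt_snd hmn

end

def rayToSphere (y u : E3) : E3 :=
  y + ((-(inner ℝ y u : ℝ) + Real.sqrt ((inner ℝ y u : ℝ) ^ 2 + ‖u‖ ^ 2 * (1 - ‖y‖ ^ 2))) /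
    ‖u‖ ^ 2) • u

theorem rayToSphere_smul (y u : E3) {c : ℝ} (hc : 0 < c) :
    rayToSphere y (c • u) = rayToSphere y u := by
  rcases eq_or_ne u 0 with rfl | hu
  · rw [smul_zero]
  have hu' : ‖u‖ ≠ 0 := norm_ne_zero_iff.mpr hu
  have hdisc : (c * inner ℝ y u) ^ 2 + (c * ‖u‖) ^ 2 * (1 - ‖y‖ ^ 2)
      = c ^ 2 * ((inner ℝ y u) ^ 2 + ‖u‖ ^ 2 * (1 - ‖y‖ ^ 2)) := by ring
  simp only [rayToSphere, real_inner_smul_right, norm_smul, Real.norm_of_nonneg hc.le, hdisc,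
    Real.sqrt_mul (sq_nonneg c), Real.sqrt_sq hc.le, smul_smul]
  congr 2
  field_simp

theorem contDiffAt_uncurry_rayToSphere {y u : E3} (hy : ‖y‖ < 1) (hu : u ≠ 0) :
    ContDiffAt ℝ 2 (Function.uncurry rayToSphere) (y, u) := by
  have hu2 : 0 < ‖u‖ ^ 2 := by positivity
  have hdisc : 0 < (inner ℝ y u : ℝ) ^ 2 + ‖u‖ ^ 2 * (1 - ‖y‖ ^ 2) := by
    have : 0 < 1 - ‖y‖ ^ 2 := by nlinarith [norm_nonneg y]
    positivity
  have hinner : ContDiffAt ℝ 2 (fun p : E3 × E3 => (inner ℝ p.1 p.2 : ℝ)) (y, u) :=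
    contDiffAt_fst.inner ℝ contDiffAt_snd
  have hnorm₁ : ContDiffAt ℝ 2 (fun p : E3 × E3 => ‖p.1‖ ^ 2) (y, u) :=
    (contDiff_norm_sq ℝ).contDiffAt.comp _ contDiffAt_fst
  have hnorm₂ : ContDiffAt ℝ 2 (fun p : E3 × E3 => ‖p.2‖ ^ 2) (y, u) :=
    (contDiff_norm_sq ℝ).contDiffAt.comp _ contDiffAt_snd
  have hsqrt := ((hinner.pow 2).add (hnorm₂.mul (contDiffAt_const.sub hnorm₁))).sqrt hdisc.ne'
  exact contDiffAt_fst.add (((hinner.neg.add hsqrt).div hnorm₂ hu2.ne').smul contDiffAt_snd)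

theorem fderiv_rayToSphere_eq_smul (y u : E3) {c : ℝ} (hc : 0 < c) :
    fderiv ℝ (rayToSphere y) u = c • fderiv ℝ (rayToSphere y) (c • u) := by
  simpa using fderiv_eq_smul_fderiv_smul_of_eventuallyEq (f := rayToSphere y) (a := (1 : ℝ))
    (u := u) (.of_forall fun v => by simp [rayToSphere_smul y v hc])

theorem fderiv_fderiv_rayToSphere_eq_smul (y u : E3) {c : ℝ} (hc : 0 < c) :
    fderiv ℝ (fderiv ℝ (rayToSphere y)) u =
      (c * c) • fderiv ℝ (fderiv ℝ (rayToSphere y)) (c • u) :=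
  fderiv_eq_smul_fderiv_smul_of_eventuallyEq
    (.of_forall fun v => fderiv_rayToSphere_eq_smul y v hc)

theorem exists_bound_fderiv_rayToSphere_of_norm_eq_one {r : ℝ} (hr : r < 1) :
    ∃ C, ∀ y u : E3, ‖y‖ ≤ r → ‖u‖ = 1 →
      ‖fderiv ℝ (rayToSphere y) u‖ ≤ C ∧ ‖fderiv ℝ (fderiv ℝ (rayToSphere y)) u‖ ≤ C := by
  set K : Set (E3 × E3) := Metric.closedBall 0 r ×ˢ Metric.sphere 0 1
  have hK : IsCompact K := (isCompact_closedBall _ _).prod (isCompact_sphere _ _)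
  have hsmooth : ∀ p ∈ K, ContDiffAt ℝ 2 (Function.uncurry rayToSphere) p := by
    rintro ⟨y, u⟩ ⟨hy, hu⟩
    rw [mem_closedBall_zero_iff] at hy
    rw [mem_sphere_zero_iff_norm] at hu
    exact contDiffAt_uncurry_rayToSphere (hy.trans_lt hr) (norm_ne_zero_iff.mp (by simp [hu]))
  have hD₁ : ∀ p ∈ K, ContDiffAt ℝ 1 (fun p : E3 × E3 => fderiv ℝ (rayToSphere p.1) p.2) p :=
    fun p hp => (hsmooth p hp).fderiv_uncurry (by norm_num)
  have hD₂ : ∀ p ∈ K, ContDiffAt ℝ 0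
      (fun p : E3 × E3 => fderiv ℝ (fderiv ℝ (rayToSphere p.1)) p.2) p :=
    fun p hp => ContDiffAt.fderiv_uncurry (f := fun y => fderiv ℝ (rayToSphere y)) (hD₁ p hp)
      (by norm_num)
  obtain ⟨C₁, hC₁⟩ := hK.exists_bound_of_continuousOn
    fun p hp => (hD₁ p hp).continuousAt.continuousWithinAt
  obtain ⟨C₂, hC₂⟩ := hK.exists_bound_of_continuousOn (E := E3 →L[ℝ] E3 →L[ℝ] E3)
    fun p hp => (hD₂ p hp).continuousAt.continuousWithinAt
  refine ⟨max C₁ C₂, fun y u hy hu => ?_⟩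
  have hp : (y, u) ∈ K := ⟨mem_closedBall_zero_iff.mpr hy, mem_sphere_zero_iff_norm.mpr hu⟩
  exact ⟨(hC₁ _ hp).trans (le_max_left _ _), (hC₂ _ hp).trans (le_max_right _ _)⟩

theorem exists_bound_fderiv_rayToSphere {r : ℝ} (hr : r < 1) :
    ∃ C, 0 < C ∧ ∀ y u : E3, ‖y‖ ≤ r → u ≠ 0 →
      ‖fderiv ℝ (rayToSphere y) u‖ ≤ C / ‖u‖ ∧
      ‖fderiv ℝ (fderiv ℝ (rayToSphere y)) u‖ ≤ C / ‖u‖ ^ 2 := by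
  obtain ⟨C, hC⟩ := exists_bound_fderiv_rayToSphere_of_norm_eq_one hr
  refine ⟨max C 1, by positivity, fun y u hy hu => ?_⟩
  have hc : 0 < ‖u‖⁻¹ := inv_pos.mpr (norm_pos_iff.mpr hu)
  have hunit : ‖‖u‖⁻¹ • u‖ = 1 := by
    rw [norm_smul, norm_inv, norm_norm, inv_mul_cancel₀ (norm_ne_zero_iff.mpr hu)]
  obtain ⟨h₁, h₂⟩ := hC y _ hy hunit
  rw [fderiv_rayToSphere_eq_smul y u hc, fderiv_fderiv_rayToSphere_eq_smul y u hc,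
    div_eq_inv_mul, div_eq_inv_mul, ← inv_pow, sq]
  constructor
  · refine (ContinuousLinearMap.opNorm_smul_le _ _).trans ?_
    rw [Real.norm_of_nonneg hc.le]
    gcongr
    exact h₁.trans (le_max_left _ _)
  · refine (ContinuousLinearMap.opNorm_smul_le _ _).trans ?_
    rw [Real.norm_of_nonneg (by positivity)]
    gcongr
    exact h₂.trans (le_max_left _ _)

theorem stmt7 : ∃ C : ℝ, 0 < C ∧
    ∀ y : E3, ‖y‖ < 1 / 2 → ∀ s : E3, ‖s‖ ≤ 1 → s ≠ y →
      ‖fderiv ℝ (piProj y) s‖ ≤ C / ‖s - y‖ ∧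
      ‖fderiv ℝ (fderiv ℝ (piProj y)) s‖ ≤ C / ‖s - y‖ ^ 2 := by
  obtain ⟨C, hC, hbound⟩ := exists_bound_fderiv_rayToSphere (r := 1 / 2) (by norm_num)
  refine ⟨C, hC, fun y hy s _ hsy => ?_⟩
  have hD : fderiv ℝ (piProj y) = fun s => fderiv ℝ (rayToSphere y) (s - y) :=
    funext fun _ => fderiv_comp_sub (𝕜 := ℝ) (f := rayToSphere y) y
  rw [hD, fderiv_comp_sub]
  exact hbound y (s - y) hy.le (sub_ne_zero.mpr hsy)
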